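/- The maps m_{a,b} and m′_{a,b} satisfy the Clifford algebra relation: for all a, b ∈ M₂(ℂ), the compositions m′_{a,b} ∘ m_{a,b} and m_{a,b} ∘ m′_{a,b} both equal scalar multiplication by det a − det b on W (multiplying twice by the vector (a,b) is multiplication by its norm q(a,b)). -/
import Mathlib


open Matrix

/-- `M2` is the algebra of 2×2 complex matrices. -/
abbrev M2 : Type := Matrix (Fin 2) (Fin 2) ℂ

lemma adjugate_add (x y : M2) : (x + y).adjugate = x.adjugate + y.adjugate := by
  rw [Matrix.adjugate_fin_two, Matrix.adjugate_fin_two, Matrix.adjugate_fin_two]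
  ext i j
  fin_cases i <;> fin_cases j <;> simp [Matrix.add_apply] <;> ring

lemma adjugate_csmul (c : ℂ) (x : M2) : (c • x).adjugate = c • x.adjugate := by
  rw [Matrix.adjugate_fin_two, Matrix.adjugate_fin_two]
  ext i j
  fin_cases i <;> fin_cases j <;> simp [Matrix.smul_apply]

/-- Clifford multiplication by the vector `(a, b) ∈ W = M₂(ℂ) × M₂(ℂ)`, viewed as a
`ℂ`-linear map `S⁺ → S⁻`, both half-spinor spaces being identified with `W`:
`m_{a,b}(x, y) = (adj(a)·adj(x) + adj(y)·b, b·x + y·adj(a))`. -/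
noncomputable def cliffordMul (a b : M2) : (M2 × M2) →ₗ[ℂ] (M2 × M2) where
  toFun p := (a.adjugate * p.1.adjugate + p.2.adjugate * b, b * p.1 + p.2 * a.adjugate)
  map_add' := by
    intro p q
    simp only [adjugate_add, mul_add, add_mul, Prod.fst_add, Prod.snd_add, Prod.mk_add_mk]
    refine Prod.ext ?_ ?_ <;> dsimp <;> abel
  map_smul' := by
    intro c p
    simp [adjugate_csmul, Matrix.mul_smul, Matrix.smul_mul, smul_add]

/-- Clifford multiplication by the vector `(a, b) ∈ W = M₂(ℂ) × M₂(ℂ)`, viewed as a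
`ℂ`-linear map `S⁻ → S⁺`, both half-spinor spaces being identified with `W`:
`m′_{a,b}(u, v) = (adj(u)·adj(a) − adj(b)·v, v·a − b·adj(u))`. -/
noncomputable def cliffordMul' (a b : M2) : (M2 × M2) →ₗ[ℂ] (M2 × M2) where
  toFun p := (p.1.adjugate * a.adjugate - b.adjugate * p.2, p.2 * a - b * p.1.adjugate)
  map_add' := by
    intro p q
    simp only [adjugate_add, mul_add, add_mul, sub_mul, mul_sub, Prod.fst_add, Prod.snd_add,
      Prod.mk_add_mk]
    refine Prod.ext ?_ ?_ <;> dsimp <;> abel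
  map_smul' := by
    intro c p
    simp [adjugate_csmul, Matrix.mul_smul, Matrix.smul_mul, smul_sub]

lemma adj_adj (x : M2) : x.adjugate.adjugate = x := by
  rw [Matrix.adjugate_fin_two, Matrix.adjugate_fin_two]
  ext i j
  fin_cases i <;> fin_cases j <;> simp

lemma adjugate_sub2 (x y : M2) : (x - y).adjugate = x.adjugate - y.adjugate := by
  rw [sub_eq_add_neg, adjugate_add, ← neg_one_smul ℂ y, adjugate_csmul]
  module

lemma adj_mul_mul (b x : M2) : b.adjugate * (b * x) = b.det • x := by
  rw [← mul_assoc, Matrix.adjugate_mul, Matrix.smul_mul, Matrix.one_mul]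

lemma mul_adj_mul (b x : M2) : b * (b.adjugate * x) = b.det • x := by
  rw [← mul_assoc, Matrix.mul_adjugate, Matrix.smul_mul, Matrix.one_mul]

lemma mul_mul_adj (x a : M2) : x * a * a.adjugate = a.det • x := by
  rw [mul_assoc, Matrix.mul_adjugate, Matrix.mul_smul, Matrix.mul_one]

lemma adj_mul_mul' (b x : M2) : b.adjugate * b * x = b.det • x := by
  rw [Matrix.adjugate_mul, Matrix.smul_mul, Matrix.one_mul]

lemma mul_adj_mul' (b x : M2) : b * b.adjugate * x = b.det • x := by
  rw [Matrix.mul_adjugate, Matrix.smul_mul, Matrix.one_mul]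

lemma mul_mul_adj' (x a : M2) : x * a.adjugate * a = a.det • x := by
  rw [mul_assoc, Matrix.adjugate_mul, Matrix.mul_smul, Matrix.mul_one]

/-- The Clifford relation: multiplying twice by the vector `(a, b)` is multiplication by
its norm `q(a,b) = det a − det b`; both composites `m′_{a,b} ∘ m_{a,b}` and
`m_{a,b} ∘ m′_{a,b}` equal scalar multiplication by `det a − det b` on `W`. -/
theorem cliffordMul_comp_cliffordMul' (a b : M2) :
    (cliffordMul' a b).comp (cliffordMul a b)
        = (a.det - b.det) • (LinearMap.id : (M2 × M2) →ₗ[ℂ] (M2 × M2)) ∧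
      (cliffordMul a b).comp (cliffordMul' a b)
        = (a.det - b.det) • (LinearMap.id : (M2 × M2) →ₗ[ℂ] (M2 × M2)) := by
  constructor <;>
  · apply LinearMap.ext
    rintro ⟨x, y⟩
    refine Prod.ext ?_ ?_ <;>
    · show _ = _
      simp only [cliffordMul, cliffordMul', LinearMap.comp_apply, LinearMap.coe_mk,
        AddHom.coe_mk, LinearMap.smul_apply, LinearMap.id_apply, Prod.smul_fst, Prod.smul_snd,
        adjugate_add, adjugate_sub2, Matrix.adjugate_mul_distrib, adj_adj,
        mul_add, add_mul, sub_mul, mul_sub, adjugate_csmul,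
        adj_mul_mul, mul_adj_mul, mul_mul_adj, ← mul_assoc,
        adj_mul_mul', mul_adj_mul', mul_mul_adj',
        Matrix.mul_smul, Matrix.smul_mul, Prod.fst_add, Prod.snd_add,
        Prod.smul_fst, Prod.smul_snd]
      module
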